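/- Let K > 0 and let z, ζ, w ∈ 𝔻 satisfy ρ(ζ, w) ≤ (e^{2K}−1)/(e^{2K}+1) and ρ(w, z) ≥ tanh(1). Then ρ(w, z) ≥ ρ(z, ζ)^{2e^{2K}}; equivalently, log(1/ρ(w,z)) ≤ 2e^{2K}·log(1/ρ(z,ζ)) whenever z ≠ ζ. -/

import Mathlib

/-! The pseudohyperbolic distance is invariant under the disc automorphisms
`z ↦ (z - w) / (1 - w̄ z)`. Moving `w` to `0` gives the strong triangle inequality
`ρ(z,ζ) ≤ (ρ(z,w) + ρ(ζ,w)) / (1 + ρ(z,w) ρ(ζ,w))`, the addition law of `tanh`.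
For `t = ρ(w,z) ≥ tanh 1 ≥ 1/2` and `s = ρ(ζ,w) ≤ tanh K`, the bound `R = (t + s) / (1 + t s)`
satisfies `1 - R = (1 - t)(1 - s) / (1 + t s) ≥ (1 - t) / (2 e^{2K} t)`, and the estimates
`log R ≤ R - 1`, `1 - 1/t ≤ log t` turn this into `2 e^{2K} log R ≤ log t`. -/

open Complex Metric Set

/-- The open unit disk in the complex plane. -/
def unitDisk : Set ℂ := Metric.ball 0 1

/-- The pseudohyperbolic distance `ρ(z,w) = |(z-w)/(1 - conj(w) z)|`. -/
noncomputable def pseudoDist (z w : ℂ) : ℝ :=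
  ‖(z - w) / (1 - (starRingEnd ℂ) w * z)‖

noncomputable def moebius (w z : ℂ) : ℂ := (z - w) / (1 - (starRingEnd ℂ) w * z)

/-- `tanh (a + b) = hyperbolicAdd (tanh a) (tanh b)`. -/
noncomputable def hyperbolicAdd (s t : ℝ) : ℝ := (s + t) / (1 + s * t)

lemma mem_unitDisk {z : ℂ} : z ∈ unitDisk ↔ ‖z‖ < 1 := by
  simp [unitDisk]

lemma pseudoDist_comm (z w : ℂ) : pseudoDist z w = pseudoDist w z := by
  rw [pseudoDist, pseudoDist, norm_div, norm_div, norm_sub_rev z w, ← norm_conj (1 - _)]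
  congr 3
  simp only [map_sub, map_one, map_mul, conj_conj, mul_comm]

section Disk

variable {z w ζ : ℂ}

lemma one_sub_conj_mul_ne_zero (hz : ‖z‖ < 1) (hw : ‖w‖ < 1) :
    1 - (starRingEnd ℂ) w * z ≠ 0 := by
  have hlt : ‖(starRingEnd ℂ) w * z‖ < 1 := by
    rw [norm_mul, norm_conj]
    exact mul_lt_one_of_nonneg_of_lt_one_left (norm_nonneg w) hw hz.le
  intro h
  rw [← sub_eq_zero.mp h, norm_one] at hlt
  exact hlt.false

lemma normSq_one_sub_conj_mul_sub_normSq_sub (z w : ℂ) :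
    normSq (1 - (starRingEnd ℂ) w * z) - normSq (z - w) = (1 - normSq z) * (1 - normSq w) := by
  simp only [normSq_apply, sub_re, sub_im, mul_re, mul_im, conj_re, conj_im, one_re, one_im]
  ring

lemma pseudoDist_lt_one (hz : ‖z‖ < 1) (hw : ‖w‖ < 1) : pseudoDist z w < 1 := by
  have hd := one_sub_conj_mul_ne_zero hz hw
  have hz2 : normSq z < 1 := by rw [normSq_eq_norm_sq]; nlinarith [norm_nonneg z]
  have hw2 : normSq w < 1 := by rw [normSq_eq_norm_sq]; nlinarith [norm_nonneg w]
  rw [pseudoDist, norm_div, div_lt_one (norm_pos_iff.mpr hd), ← sq_lt_sq₀ (norm_nonneg _)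
    (norm_nonneg _), ← normSq_eq_norm_sq, ← normSq_eq_norm_sq]
  nlinarith [normSq_one_sub_conj_mul_sub_normSq_sub z w]

lemma pseudoDist_pos (hz : ‖z‖ < 1) (hw : ‖w‖ < 1) (hne : z ≠ w) : 0 < pseudoDist z w :=
  norm_pos_iff.mpr (div_ne_zero (sub_ne_zero.mpr hne) (one_sub_conj_mul_ne_zero hz hw))

lemma pseudoDist_le_hyperbolicAdd_norm (hz : ‖z‖ < 1) (hw : ‖w‖ < 1) :
    pseudoDist z w ≤ hyperbolicAdd ‖z‖ ‖w‖ := by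
  have hd := normSq_pos.mpr (one_sub_conj_mul_ne_zero hz hw)
  have hx : -(‖z‖ * ‖w‖) ≤ ((starRingEnd ℂ) w * z).re := by
    have := abs_re_le_norm ((starRingEnd ℂ) w * z)
    rw [norm_mul, norm_conj] at this
    linarith [neg_abs_le ((starRingEnd ℂ) w * z).re]
  have hnum : normSq (z - w) = ‖z‖ ^ 2 + ‖w‖ ^ 2 - 2 * ((starRingEnd ℂ) w * z).re := by
    simp only [← normSq_eq_norm_sq, normSq_apply, sub_re, sub_im, mul_re, conj_re, conj_im]; ring
  have hden : normSq (1 - (starRingEnd ℂ) w * z)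
      = 1 + ‖z‖ ^ 2 * ‖w‖ ^ 2 - 2 * ((starRingEnd ℂ) w * z).re := by
    simp only [← normSq_eq_norm_sq, normSq_apply, sub_re, sub_im, mul_re, mul_im, conj_re, conj_im,
      one_re, one_im]; ring
  rw [pseudoDist, hyperbolicAdd, ← sq_le_sq₀ (norm_nonneg _) (by positivity), div_pow,
    norm_div, div_pow, ← normSq_eq_norm_sq, ← normSq_eq_norm_sq,
    div_le_div_iff₀ hd (by positivity), hnum, hden]
  nlinarith [mul_nonneg (mul_nonneg (neg_le_iff_add_nonneg.mp hx) (sub_nonneg.mpr hz.le))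
    (sub_nonneg.mpr hw.le), norm_nonneg z, norm_nonneg w,
    mul_nonneg (norm_nonneg z) (norm_nonneg w)]

lemma moebius_sub_moebius (hz : ‖z‖ < 1) (hζ : ‖ζ‖ < 1) (hw : ‖w‖ < 1) :
    moebius w z - moebius w ζ = (z - ζ) * (1 - (starRingEnd ℂ) w * w) /
      ((1 - (starRingEnd ℂ) w * z) * (1 - (starRingEnd ℂ) w * ζ)) := by
  rw [moebius, moebius, div_sub_div _ _ (one_sub_conj_mul_ne_zero hz hw)
    (one_sub_conj_mul_ne_zero hζ hw)]
  ring

lemma one_sub_conj_moebius_mul_moebius (hz : ‖z‖ < 1) (hζ : ‖ζ‖ < 1) (hw : ‖w‖ < 1) :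
    1 - (starRingEnd ℂ) (moebius w ζ) * moebius w z
      = (1 - (starRingEnd ℂ) w * w) * (1 - (starRingEnd ℂ) ζ * z) /
        ((starRingEnd ℂ) (1 - (starRingEnd ℂ) w * ζ) * (1 - (starRingEnd ℂ) w * z)) := by
  have hζ' := (map_ne_zero (starRingEnd ℂ)).mpr (one_sub_conj_mul_ne_zero hζ hw)
  rw [moebius, moebius, map_div₀, div_mul_div_comm,
    one_sub_div (mul_ne_zero hζ' (one_sub_conj_mul_ne_zero hz hw))]
  simp only [map_sub, map_mul, map_one, conj_conj]
  ring

lemma pseudoDist_moebius (hz : ‖z‖ < 1) (hζ : ‖ζ‖ < 1) (hw : ‖w‖ < 1) :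
    pseudoDist (moebius w z) (moebius w ζ) = pseudoDist z ζ := by
  have hw' := norm_ne_zero_iff.mpr (one_sub_conj_mul_ne_zero hw hw)
  have hzw := norm_ne_zero_iff.mpr (one_sub_conj_mul_ne_zero hz hw)
  have hζw := norm_ne_zero_iff.mpr (one_sub_conj_mul_ne_zero hζ hw)
  rw [pseudoDist, pseudoDist, moebius_sub_moebius hz hζ hw,
    one_sub_conj_moebius_mul_moebius hz hζ hw]
  simp only [norm_div, norm_mul, norm_conj]
  rw [mul_comm ‖1 - (starRingEnd ℂ) w * ζ‖, div_div_div_cancel_right₀ (mul_ne_zero hzw hζw),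
    mul_comm ‖1 - (starRingEnd ℂ) w * w‖, mul_div_mul_right _ _ hw']

lemma pseudoDist_le_hyperbolicAdd (hz : ‖z‖ < 1) (hζ : ‖ζ‖ < 1) (hw : ‖w‖ < 1) :
    pseudoDist z ζ ≤ hyperbolicAdd (pseudoDist z w) (pseudoDist ζ w) := by
  rw [← pseudoDist_moebius hz hζ hw]
  exact pseudoDist_le_hyperbolicAdd_norm (pseudoDist_lt_one hz hw) (pseudoDist_lt_one hζ hw)

end Disk

section Real

variable {E s t : ℝ}

lemma one_sub_hyperbolicAdd (h : 1 + t * s ≠ 0) :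
    1 - hyperbolicAdd t s = (1 - t) * (1 - s) / (1 + t * s) := by
  rw [hyperbolicAdd, one_sub_div h]
  ring

lemma one_add_mul_le_two_mul_mul_one_sub (hE : 1 ≤ E) (ht : 1 / 2 ≤ t)
    (hsE : s ≤ (E - 1) / (E + 1)) : 1 + t * s ≤ 2 * E * t * (1 - s) := by
  rw [le_div_iff₀ (by linarith)] at hsE
  have htE : 0 ≤ t * (2 * E + 1) := mul_nonneg (by linarith) (by linarith)
  nlinarith [mul_le_mul_of_nonneg_left hsE htE]

lemma hyperbolicAdd_rpow_le (hE : 1 ≤ E) (ht : 1 / 2 ≤ t) (ht1 : t ≤ 1) (hs : 0 ≤ s)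
    (hsE : s ≤ (E - 1) / (E + 1)) : hyperbolicAdd t s ^ (2 * E) ≤ t := by
  have ht0 : 0 < t := by linarith
  have hden : 0 < 1 + t * s := by positivity
  have hR : 0 < hyperbolicAdd t s := by unfold hyperbolicAdd; positivity
  have hgap : (1 - t) / t ≤ 2 * E * (1 - hyperbolicAdd t s) := by
    rw [one_sub_hyperbolicAdd hden.ne', div_le_iff₀ ht0, mul_div_assoc', div_mul_eq_mul_div,
      le_div_iff₀ hden]
    nlinarith [mul_le_mul_of_nonneg_left (one_add_mul_le_two_mul_mul_one_sub hE ht hsE)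
      (sub_nonneg.mpr ht1)]
  rw [← Real.log_le_log_iff (by positivity) ht0, Real.log_rpow hR]
  calc 2 * E * Real.log (hyperbolicAdd t s) ≤ 2 * E * (hyperbolicAdd t s - 1) := by
        gcongr; exact Real.log_le_sub_one_of_pos hR
    _ ≤ 1 - t⁻¹ := by rw [sub_div, div_self ht0.ne', one_div] at hgap; linarith
    _ ≤ Real.log t := Real.one_sub_inv_le_log_of_pos ht0

end Real

lemma half_le_tanh_one : 1 / 2 ≤ Real.tanh 1 := by
  rw [Real.tanh_eq, Real.exp_neg, le_div_iff₀ (by positivity)]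
  have h := Real.exp_pos 1
  have h3 : 3 ≤ Real.exp 1 * Real.exp 1 := by
    rw [← Real.exp_add]; linarith [Real.add_one_le_exp (1 + 1)]
  field_simp
  nlinarith

/-- Let `K > 0` and `z, ζ, w ∈ 𝔻` with `ρ(ζ,w) ≤ (e^{2K}-1)/(e^{2K}+1)` and
`ρ(w,z) ≥ tanh 1`. Then `ρ(w,z) ≥ ρ(z,ζ)^(2 e^{2K})`; equivalently,
`log(1/ρ(w,z)) ≤ 2 e^{2K} log(1/ρ(z,ζ))` whenever `z ≠ ζ`. -/
theorem pseudoDist_power_bound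
    (K : ℝ) (hK : 0 < K) (z ζ w : ℂ)
    (hz : z ∈ unitDisk) (hζ : ζ ∈ unitDisk) (hw : w ∈ unitDisk)
    (h1 : pseudoDist ζ w ≤ (Real.exp (2 * K) - 1) / (Real.exp (2 * K) + 1))
    (h2 : Real.tanh 1 ≤ pseudoDist w z) :
    pseudoDist z ζ ^ (2 * Real.exp (2 * K)) ≤ pseudoDist w z ∧
    (z ≠ ζ →
      Real.log (1 / pseudoDist w z) ≤ 2 * Real.exp (2 * K) * Real.log (1 / pseudoDist z ζ)) := by
  rw [mem_unitDisk] at hz hζ hw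
  have hE : 1 ≤ Real.exp (2 * K) := Real.one_le_exp (by positivity)
  have hpow : pseudoDist z ζ ^ (2 * Real.exp (2 * K)) ≤ pseudoDist w z := calc
    _ ≤ hyperbolicAdd (pseudoDist w z) (pseudoDist ζ w) ^ (2 * Real.exp (2 * K)) := by
      rw [← pseudoDist_comm z w]
      exact Real.rpow_le_rpow (norm_nonneg _) (pseudoDist_le_hyperbolicAdd hz hζ hw)
        (by positivity)
    _ ≤ pseudoDist w z := hyperbolicAdd_rpow_le hE (half_le_tanh_one.trans h2)
        (pseudoDist_lt_one hw hz).le (norm_nonneg _) h1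
  refine ⟨hpow, fun hne => ?_⟩
  have hr := pseudoDist_pos hz hζ hne
  rw [one_div, one_div, Real.log_inv, Real.log_inv, mul_neg, neg_le_neg_iff, ← Real.log_rpow hr]
  exact Real.log_le_log (by positivity) hpow
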